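/- Fix polytopes gamma (playing the role of gamma_k) and kappa_1,...,kappa_{k-1} in a real vector space. For J a subset of {1,...,k-1} define delta(J) = dim(gamma + sum_{j in J} kappa_j) - |J|. If delta(J) >= 0 for all J, then the collection {J : delta(J) = 0} is closed under unions and intersections; in particular, if it is nonempty it has a unique maximal element. -/

import Mathlib

open scoped Pointwise

/-! The direction of the affine span of a Minkowski sum of nonempty sets is the sum of the
directions of the summands, so `J ↦ dim (γ + ∑_{j ∈ J} κ_j)` is the rank function
`J ↦ dim (W_γ ⊔ ⨆_{j ∈ J} W_j)` of finitely many finite-dimensional subspaces. By the Grassmann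
formula such a rank function is submodular, hence so is `δ`, since `J ↦ |J|` is modular. A
nonnegative submodular function that vanishes on `I` and `J` must vanish on `I ∪ J` and `I ∩ J`,
and the union of all zero sets is then the largest one. -/

/-- A polytope: the convex hull of a nonempty finite set of points. -/
def IsPolytope {V : Type*} [AddCommGroup V] [Module ℝ V] (P : Set V) : Prop :=
  ∃ s : Finset V, s.Nonempty ∧ P = convexHull ℝ (s : Set V)

/-- The dimension of (the affine span of) a subset of a real vector space. -/
noncomputable def polyDim {V : Type*} [AddCommGroup V] [Module ℝ V] (P : Set V) : ℕ :=
  Module.finrank ℝ (affineSpan ℝ P).direction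

/-- `δ(J) = dim(γ + ∑_{j ∈ J} κ_j) - |J|`. -/
noncomputable def deltaFn {V : Type*} [AddCommGroup V] [Module ℝ V] {m : ℕ}
    (γ : Set V) (κ : Fin m → Set V) (J : Finset (Fin m)) : ℤ :=
  (polyDim (γ + ∑ j ∈ J, κ j) : ℤ) - J.card

section VectorSpan

variable {k V ι : Type*} [Ring k] [AddCommGroup V] [Module k V]

theorem vectorSpan_add_le (A B : Set V) :
    vectorSpan k (A + B) ≤ vectorSpan k A ⊔ vectorSpan k B := by
  rw [vectorSpan_def, Submodule.span_le]
  rintro _ ⟨_, ⟨a, ha, b, hb, rfl⟩, _, ⟨a', ha', b', hb', rfl⟩, rfl⟩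
  have hsplit : (a + b) -ᵥ (a' + b') = (a -ᵥ a') + (b -ᵥ b') := by
    simp only [vsub_eq_sub]
    abel
  show (a + b) -ᵥ (a' + b') ∈ _
  rw [hsplit]
  exact Submodule.add_mem_sup (vsub_mem_vectorSpan k ha ha') (vsub_mem_vectorSpan k hb hb')

theorem vectorSpan_le_vectorSpan_add_right {A : Set V} (hA : A.Nonempty) (B : Set V) :
    vectorSpan k B ≤ vectorSpan k (A + B) := by
  obtain ⟨a, ha⟩ := hA
  calc vectorSpan k B = vectorSpan k (a +ᵥ B) := (vectorSpan_vadd k B a).symm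
    _ ≤ vectorSpan k (A + B) := by
      refine vectorSpan_mono k ?_
      rintro _ ⟨b, hb, rfl⟩
      exact Set.add_mem_add ha hb

theorem vectorSpan_add {A B : Set V} (hA : A.Nonempty) (hB : B.Nonempty) :
    vectorSpan k (A + B) = vectorSpan k A ⊔ vectorSpan k B := by
  refine le_antisymm (vectorSpan_add_le A B) (sup_le ?_ (vectorSpan_le_vectorSpan_add_right hA B))
  rw [add_comm]
  exact vectorSpan_le_vectorSpan_add_right hB A

theorem Set.finsetSum_nonempty {κ : ι → Set V} (s : Finset ι) (hκ : ∀ j ∈ s, (κ j).Nonempty) :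
    (∑ j ∈ s, κ j).Nonempty := by
  induction s using Finset.cons_induction with
  | empty => exact Set.zero_nonempty
  | cons a s _ ih =>
    rw [Finset.sum_cons]
    exact (hκ a (Finset.mem_cons_self a s)).add (ih fun j hj ↦ hκ j (Finset.mem_cons_of_mem hj))

theorem vectorSpan_finsetSum {κ : ι → Set V} (s : Finset ι) (hκ : ∀ j ∈ s, (κ j).Nonempty) :
    vectorSpan k (∑ j ∈ s, κ j) = s.sup fun j ↦ vectorSpan k (κ j) := by
  induction s using Finset.cons_induction with
  | empty => simp [← Set.singleton_zero]
  | cons a s _ ih =>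
    have hκs : ∀ j ∈ s, (κ j).Nonempty := fun j hj ↦ hκ j (Finset.mem_cons_of_mem hj)
    rw [Finset.sum_cons, Finset.sup_cons,
      vectorSpan_add (hκ a (Finset.mem_cons_self a s)) (Set.finsetSum_nonempty s hκs), ih hκs]

end VectorSpan

theorem Submodule.finrank_sup_add_finrank_le_of_le_inf {K V : Type*} [DivisionRing K]
    [AddCommGroup V] [Module K V] {A B C : Submodule K V} [FiniteDimensional K A]
    [FiniteDimensional K B] (hC : C ≤ A ⊓ B) :
    Module.finrank K ↥(A ⊔ B) + Module.finrank K C ≤ Module.finrank K A + Module.finrank K B := by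
  rw [← Submodule.finrank_sup_add_finrank_inf_eq A B]
  exact Nat.add_le_add_left (Submodule.finrank_mono hC) _

theorem Submodule.finrank_sup_finsetSup_submodular {K V ι : Type*} [DivisionRing K]
    [AddCommGroup V] [Module K V] [DecidableEq ι] (W : Submodule K V) (f : ι → Submodule K V)
    [FiniteDimensional K W] [∀ i, FiniteDimensional K (f i)] (I J : Finset ι) :
    Module.finrank K ↥(W ⊔ (I ∪ J).sup f) + Module.finrank K ↥(W ⊔ (I ∩ J).sup f) ≤
      Module.finrank K ↥(W ⊔ I.sup f) + Module.finrank K ↥(W ⊔ J.sup f) := by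
  have hunion : W ⊔ (I ∪ J).sup f = (W ⊔ I.sup f) ⊔ (W ⊔ J.sup f) := by
    rw [Finset.sup_union, sup_sup_distrib_left]
  rw [hunion]
  refine finrank_sup_add_finrank_le_of_le_inf (le_inf ?_ ?_) <;>
    exact sup_le_sup_left (Finset.sup_mono (by simp [Finset.inter_subset_left,
      Finset.inter_subset_right])) W

section Polytope

variable {V : Type*} [AddCommGroup V] [Module ℝ V]

theorem IsPolytope.nonempty {P : Set V} (hP : IsPolytope P) : P.Nonempty := by
  obtain ⟨s, hs, rfl⟩ := hP
  exact convexHull_nonempty_iff.mpr (by exact_mod_cast hs)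

theorem IsPolytope.finiteDimensional_vectorSpan {P : Set V} (hP : IsPolytope P) :
    FiniteDimensional ℝ (vectorSpan ℝ P) := by
  obtain ⟨s, -, rfl⟩ := hP
  rw [← direction_affineSpan, affineSpan_convexHull, direction_affineSpan]
  exact finiteDimensional_vectorSpan_of_finite ℝ s.finite_toSet

theorem polyDim_add_finsetSum {ι : Type*} {γ : Set V} {κ : ι → Set V} (hγ : γ.Nonempty)
    (hκ : ∀ j, (κ j).Nonempty) (J : Finset ι) :
    polyDim (γ + ∑ j ∈ J, κ j) =
      Module.finrank ℝ ↥(vectorSpan ℝ γ ⊔ J.sup fun j ↦ vectorSpan ℝ (κ j)) := by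
  rw [polyDim, direction_affineSpan,
    vectorSpan_add hγ (Set.finsetSum_nonempty J fun j _ ↦ hκ j),
    vectorSpan_finsetSum J fun j _ ↦ hκ j]

theorem deltaFn_union_add_deltaFn_inter_le {m : ℕ} {γ : Set V} {κ : Fin m → Set V}
    (hγ : IsPolytope γ) (hκ : ∀ j, IsPolytope (κ j)) (I J : Finset (Fin m)) :
    deltaFn γ κ (I ∪ J) + deltaFn γ κ (I ∩ J) ≤ deltaFn γ κ I + deltaFn γ κ J := by
  have := hγ.finiteDimensional_vectorSpan
  have := fun j ↦ (hκ j).finiteDimensional_vectorSpan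
  have hrank := Submodule.finrank_sup_finsetSup_submodular (vectorSpan ℝ γ)
    (fun j ↦ vectorSpan ℝ (κ j)) I J
  have hcard := Finset.card_union_add_card_inter I J
  simp only [deltaFn, polyDim_add_finsetSum hγ.nonempty fun j ↦ (hκ j).nonempty]
  omega

end Polytope

theorem eq_zero_union_inter_of_submodular {ι : Type*} [DecidableEq ι] {δ : Finset ι → ℤ}
    (hsub : ∀ I J, δ (I ∪ J) + δ (I ∩ J) ≤ δ I + δ J) (hnonneg : ∀ J, 0 ≤ δ J)
    {I J : Finset ι} (hI : δ I = 0) (hJ : δ J = 0) : δ (I ∪ J) = 0 ∧ δ (I ∩ J) = 0 := by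
  have := hsub I J
  have := hnonneg (I ∪ J)
  have := hnonneg (I ∩ J)
  constructor <;> omega

theorem Finset.exists_greatest_of_union_closed {ι : Type*} [Fintype ι] [DecidableEq ι]
    {p : Finset ι → Prop} (hunion : ∀ I J, p I → p J → p (I ∪ J)) (hp : ∃ J, p J) :
    ∃ J₀, p J₀ ∧ ∀ J, p J → J ⊆ J₀ := by
  classical
  obtain ⟨J, hJ⟩ := hp
  have hsupClosed : SupClosed {J | p J} := fun I hI J hJ ↦ hunion I J hI hJ
  refine ⟨(univ.filter p).sup id, ?_, fun J hJ ↦ ?_⟩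
  · exact hsupClosed.finsetSup_mem ⟨J, by simpa using hJ⟩ fun I hI ↦ by simpa using hI
  · exact le_sup (f := id) (by simpa using hJ)

/-- If `δ(J) ≥ 0` for all `J ⊆ {1,...,k-1}`, then `{J : δ(J) = 0}` is
closed under unions and intersections; in particular, if it is nonempty it has a (unique)
maximal element. -/
theorem delta_zero_closed_union_inter {V : Type*} [AddCommGroup V] [Module ℝ V]
    (k : ℕ) (γ : Set V) (κ : Fin (k - 1) → Set V)
    (hγ : IsPolytope γ) (hκ : ∀ j, IsPolytope (κ j))
    (h : ∀ J : Finset (Fin (k - 1)), 0 ≤ deltaFn γ κ J) :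
    (∀ I J : Finset (Fin (k - 1)), deltaFn γ κ I = 0 → deltaFn γ κ J = 0 →
      deltaFn γ κ (I ∪ J) = 0 ∧ deltaFn γ κ (I ∩ J) = 0) ∧
    ((∃ J, deltaFn γ κ J = 0) →
      ∃ J₀, deltaFn γ κ J₀ = 0 ∧ ∀ J, deltaFn γ κ J = 0 → J ⊆ J₀) := by
  have hclosed : ∀ I J : Finset (Fin (k - 1)), deltaFn γ κ I = 0 → deltaFn γ κ J = 0 →
      deltaFn γ κ (I ∪ J) = 0 ∧ deltaFn γ κ (I ∩ J) = 0 := fun _ _ ↦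
    eq_zero_union_inter_of_submodular (deltaFn_union_add_deltaFn_inter_le hγ hκ) h
  exact ⟨hclosed, Finset.exists_greatest_of_union_closed fun I J hI hJ ↦ (hclosed I J hI hJ).1⟩
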